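/- Pechenik's map Φ_{λ;m}, defined on an increasing gapless tableau T of two-row shape λ with maximum entry m by: (1) letting A be the set of entries of T occurring more than once, (2) letting B be the set of entries appearing in the second row immediately to the right of an element of A, (3) deleting the elements of A from the first row and the elements of B from the second row, and (4) inserting the elements of B into the first column preserving increasingness, produces a standard Young tableau with entries 1,...,m. -/

import Mathlib

/-- A two-row tableau, given by its two rows (lists of entries). -/
structure TwoRowT where
  r1 : List ℕ
  r2 : List ℕ
deriving DecidableEq

/-- A "hook-plus" tableau: two rows together with the part of the first
column lying below the second row. -/
structure HookT where
  r1 : List ℕ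
  r2 : List ℕ
  col : List ℕ
deriving DecidableEq

/-- `T` is an increasing gapless tableau of shape `(l1,l2)` with maximum entry `m`. -/
def IsIGLT (l1 l2 m : ℕ) (T : TwoRowT) : Prop :=
  T.r1.length = l1 ∧ T.r2.length = l2 ∧
  T.r1.Chain' (· < ·) ∧ T.r2.Chain' (· < ·) ∧
  (∀ j, j < l2 → T.r1.getD j 0 < T.r2.getD j 0) ∧
  (∀ x ∈ T.r1, 1 ≤ x ∧ x ≤ m) ∧ (∀ x ∈ T.r2, 1 ≤ x ∧ x ≤ m) ∧
  (∀ k, 1 ≤ k → k ≤ m → k ∈ T.r1 ∨ k ∈ T.r2) ∧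
  (m ∈ T.r1 ∨ m ∈ T.r2)

/-- The set `A` of repeated entries of a two-row increasing tableau. -/
def setA (T : TwoRowT) : List ℕ := T.r1.filter (fun x => x ∈ T.r2)

/-- The set `B`: entries of the second row immediately to the right of an element of `A`. -/
def setB (T : TwoRowT) : List ℕ :=
  (T.r2.zip T.r2.tail).filterMap (fun p => if p.1 ∈ setA T then some p.2 else none)

/-- Pechenik's map `Φ_{λ;m}`. -/
def Phi (T : TwoRowT) : HookT :=
  ⟨T.r1.filter (fun x => x ∉ setA T),
   T.r2.filter (fun x => x ∉ setB T),
   List.insertionSort (· ≤ ·) (setB T)⟩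

/-- The shape of a hook-plus tableau, as a list. -/
def shapeOf (S : HookT) : List ℕ :=
  S.r1.length :: S.r2.length :: List.replicate S.col.length 1

/-- `S` is a standard Young tableau with entries `1,...,m`. -/
def IsSYTHook (m : ℕ) (S : HookT) : Prop :=
  S.r1.Chain' (· < ·) ∧ S.r2.Chain' (· < ·) ∧
  ((S.r1.take 1) ++ (S.r2.take 1) ++ S.col).Chain' (· < ·) ∧
  (∀ j, j < S.r2.length → S.r1.getD j 0 < S.r2.getD j 0) ∧
  S.r2.length ≤ S.r1.length ∧
  (S.col ≠ [] → S.r2 ≠ []) ∧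
  (S.r1 ++ S.r2 ++ S.col).Perm (List.range' 1 m)

/-- The shape `λ_m^{(1)} = (λ₁-k, λ₂-k, 1^k)`. -/
def lamShape1 (l1 l2 k : ℕ) : List ℕ := [l1 - k, l2 - k] ++ List.replicate k 1

/-- The shape `λ_m^{(2)} = (λ₁-k, λ₂-k+1, 1^(k-1))`. -/
def lamShape2 (l1 l2 k : ℕ) : List ℕ := [l1 - k, l2 - k + 1] ++ List.replicate (k - 1) 1

/-- The set `Par(λ;m)` of shapes occurring in Pechenik's expansion. -/
def ParSet (l1 l2 n m : ℕ) : Set (List ℕ) :=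
  {s | (n - m + 1 < l2 ∨ m = n) ∧ s = lamShape1 l1 l2 (n - m)} ∪
  {s | l1 ≠ l2 ∧ m < n ∧ n - m < l2 ∧ s = lamShape2 l1 l2 (n - m)}

/-- Row index (1-based) of the entry `x` in a hook-plus tableau. -/
def rowIdx (S : HookT) (x : ℕ) : ℕ :=
  if x ∈ S.r1 then 1 else if x ∈ S.r2 then 2 else 3 + S.col.idxOf x

/-- Column index (0-based) of the entry `x` in a hook-plus tableau. -/
def colIdx (S : HookT) (x : ℕ) : ℕ :=
  if x ∈ S.r1 then S.r1.idxOf x else if x ∈ S.r2 then S.r2.idxOf x else 0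

/-- Descent set of an increasing gapless two-row tableau with max entry `m`. -/
def desT (m : ℕ) (T : TwoRowT) : Finset ℕ :=
  (Finset.Ioo 0 m).filter (fun i => i ∈ T.r1 ∧ i + 1 ∈ T.r2)

/-- Descent set of a standard Young tableau with entries `1,...,m`. -/
def desS (m : ℕ) (S : HookT) : Finset ℕ :=
  (Finset.Ioo 0 m).filter (fun i => rowIdx S i < rowIdx S (i + 1))

def swapVal (i j x : ℕ) : ℕ := if x = i then j else if x = j then i else x

/-- Swap the entries `i` and `j` in a two-row tableau. -/
def twoRowSwap (i j : ℕ) (T : TwoRowT) : TwoRowT :=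
  ⟨T.r1.map (swapVal i j), T.r2.map (swapVal i j)⟩

/-- Swap the entries `i` and `j` in a hook-plus tableau. -/
def hookSwap (i j : ℕ) (S : HookT) : HookT :=
  ⟨S.r1.map (swapVal i j), S.r2.map (swapVal i j), S.col.map (swapVal i j)⟩

/-- Searles' 0-Hecke operator `π_i` on a standard Young tableau:
`some S` means the result is `S`, `none` means the result is `0`. -/
def searlesStep (i : ℕ) (S : HookT) : Option HookT :=
  if colIdx S i < colIdx S (i + 1) then some S
  else if colIdx S i = colIdx S (i + 1) then none
  else some (hookSwap i (i + 1) S)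

/-- Kim–Yoo's 0-Hecke operator `π_i` on an increasing gapless tableau. -/
def kyStep (i : ℕ) (T : TwoRowT) : Option TwoRowT :=
  if i ∈ T.r1 ∧ i + 1 ∈ T.r2 then
    if i ∉ T.r2 ∧ i + 1 ∉ T.r1 ∧ T.r2.idxOf (i + 1) < T.r1.idxOf i then
      some (twoRowSwap i (i + 1) T)
    else none
  else some T

/-- Searles' operator, extended linearly. -/
noncomputable def piOp (i : ℕ) : (HookT →₀ ℂ) →ₗ[ℂ] (HookT →₀ ℂ) :=
  Finsupp.lsum ℂ fun S => (searlesStep i S).elim 0 fun S' => Finsupp.lsingle S'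

/-- Kim–Yoo's operator, extended linearly. -/
noncomputable def kyOp (i : ℕ) : (TwoRowT →₀ ℂ) →ₗ[ℂ] (TwoRowT →₀ ℂ) :=
  Finsupp.lsum ℂ fun T => (kyStep i T).elim 0 fun T' => Finsupp.lsingle T'

/-- The data of the boxes occupied by repeated entries: for each repeated entry `i`,
the pair of (0-based) columns of its occurrence in row 1 and in row 2.
For two-row shapes this datum determines the pair `(Γ_i(T), T⁻¹(i))`. -/
def repPairs (T : TwoRowT) : Set (ℕ × ℕ) :=
  {p | ∃ i, i ∈ T.r1 ∧ i ∈ T.r2 ∧ p = (T.r1.idxOf i, T.r2.idxOf i)}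

/-- The Kim–Yoo equivalence `∼_{λ;m}` on two-row increasing gapless tableaux. -/
def equivKY (T1 T2 : TwoRowT) : Prop := repPairs T1 = repPairs T2

/-- The equivalence class of `T` in `IGLT(λ)_m` under `∼_{λ;m}`. -/
def classOf (l1 l2 m : ℕ) (T : TwoRowT) : Set TwoRowT :=
  {T' | IsIGLT l1 l2 m T' ∧ equivKY T T'}

/-- The columns (0-based) of the bottommost boxes of the repeated entries,
listed in increasing order of the repeated entries. -/
def botCols (T : TwoRowT) : List ℕ :=
  (T.r1.filter (fun x => x ∈ T.r2)).map (fun i => T.r2.idxOf i)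

/-- The partial order `⪯` on equivalence classes. -/
def classLE (C1 C2 : Set TwoRowT) : Prop :=
  ∃ T1 ∈ C1, ∃ T2 ∈ C2, List.Forall₂ (· ≤ ·) (botCols T1) (botCols T2)

open Classical in
/-- The fundamental quasisymmetric function `F_{comp(D)}` of degree `m`,
as a formal power series in the variables `x_0, x_1, x_2, ...`. -/
noncomputable def Fqs (m : ℕ) (D : Finset ℕ) : MvPowerSeries ℕ ℚ :=
  fun e =>
    if ∃ f : Fin m → ℕ, Monotone f ∧
        (∀ j : ℕ, ∀ hj : j < m, 0 < j → j ∈ D → f ⟨j - 1, by omega⟩ < f ⟨j, hj⟩) ∧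
        (∀ i : ℕ, e i = Nat.card {j : Fin m // f j = i})
    then 1 else 0

/-- The Schur function `s_μ = Σ_{S ∈ SYT(μ)} F_{comp(Des(S))}` (for shapes
representable as hook-plus tableaux). -/
noncomputable def schurF (m : ℕ) (μ : List ℕ) : MvPowerSeries ℕ ℚ :=
  ∑ᶠ S ∈ {S : HookT | IsSYTHook m S ∧ shapeOf S = μ}, Fqs m (desS m S)

lemma countP_lt_iff (y : ℕ) : ∀ (l : List ℕ), l.Pairwise (· < ·) → ∀ j, j < l.length →
    (l.getD j 0 < y ↔ j < l.countP (fun x => decide (x < y))) := by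
  intro l
  induction l with
  | nil => simp
  | cons x t ih =>
    intro hp j hj
    rw [List.pairwise_cons] at hp
    have ht0 : ¬ x < y → t.countP (fun x => decide (x < y)) = 0 := by
      intro hxy
      rw [List.countP_eq_zero]
      intro a ha
      simp only [decide_eq_true_eq]
      exact fun h => hxy (lt_trans (hp.1 a ha) h)
    rcases j with _ | j
    · simp only [List.getD_cons_zero, List.countP_cons]
      by_cases hxy : x < y
      · rw [if_pos (decide_eq_true hxy)]
        simp [hxy]
      · rw [if_neg (by simpa using hxy), ht0 hxy]
        simp [hxy]
    · simp only [List.getD_cons_succ, List.countP_cons]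
      simp only [List.length_cons, Nat.succ_lt_succ_iff] at hj
      by_cases hxy : x < y
      · rw [if_pos (decide_eq_true hxy), ih hp.2 j hj]
        omega
      · have hlhs : ¬ t.getD j 0 < y := by
          have h1 : t.getD j 0 = t[j] := List.getD_eq_getElem t 0 hj
          have := hp.1 _ (List.getElem_mem hj)
          omega
        rw [if_neg (by simpa using hxy), ht0 hxy]
        constructor
        · intro h; exact absurd h hlhs
        · omega

lemma countP_lt_getElem (l : List ℕ) (hl : l.Pairwise (· < ·)) (q : ℕ) (hq : q < l.length) :
    l.countP (fun x => decide (x < l[q])) = q := by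
  set c := l.countP (fun x => decide (x < l[q])) with hc
  have h1 : ¬ (l.getD q 0 < l[q]) := by
    rw [List.getD_eq_getElem l 0 hq]; omega
  rw [countP_lt_iff _ l hl q hq] at h1
  rcases Nat.lt_trichotomy c q with h | h | h
  · exfalso
    have h2 : l.getD c 0 < l[q] := by
      rw [List.getD_eq_getElem l 0 (h.trans hq)]
      exact List.pairwise_iff_getElem.mp hl c q _ _ h
    rw [countP_lt_iff _ l hl c (h.trans hq)] at h2
    omega
  · exact h.symm ▸ rfl
  · omega

lemma countP_split (l : List ℕ) (p q : ℕ → Bool) :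
    l.countP p = l.countP (fun x => p x && q x) + l.countP (fun x => p x && !q x) := by
  induction l with
  | nil => simp
  | cons x t ih =>
    simp only [List.countP_cons]
    cases hp : p x <;> cases hq : q x <;> simp <;> omega

lemma sorted_head_le (l : List ℕ) (hl : l.Pairwise (· < ·)) (x : ℕ) (hx : x ∈ l) :
    l.getD 0 0 ≤ x := by
  obtain ⟨i, hi, rfl⟩ := List.mem_iff_getElem.mp hx
  rw [List.getD_eq_getElem l 0 (by omega)]
  rcases Nat.eq_zero_or_pos i with h | h
  · subst h; exact le_refl _
  · exact le_of_lt (List.pairwise_iff_getElem.mp hl 0 i (by omega) hi h)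

lemma mem_setA (T : TwoRowT) (x : ℕ) : x ∈ setA T ↔ x ∈ T.r1 ∧ x ∈ T.r2 := by
  simp [setA]

lemma fm_sublist {α β : Type*} (c : α × β → Prop) [DecidablePred c] (l : List (α × β)) :
    List.Sublist (l.filterMap (fun p => if c p then some p.2 else none)) (l.map Prod.snd) := by
  induction l with
  | nil => simp
  | cons x t ih =>
    simp only [List.filterMap_cons, List.map_cons]
    by_cases hc : c x
    · simp only [if_pos hc]
      exact ih.cons₂ _
    · simp only [if_neg hc]
      exact ih.cons _

lemma setB_sublist_tail (T : TwoRowT) : List.Sublist (setB T) T.r2.tail := by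
  have h := fm_sublist (fun p : ℕ × ℕ => p.1 ∈ setA T) (T.r2.zip T.r2.tail)
  rwa [List.map_snd_zip (by simp [List.length_tail])] at h

lemma mem_setB (T : TwoRowT) (b : ℕ) :
    b ∈ setB T ↔ ∃ j, ∃ _ : j + 1 < T.r2.length, T.r2[j] ∈ setA T ∧ b = T.r2[j + 1] := by
  constructor
  · intro hb
    rw [setB, List.mem_filterMap] at hb
    obtain ⟨p, hp, hpb⟩ := hb
    obtain ⟨j, hj, hpj⟩ := List.mem_iff_getElem.mp hp
    rw [List.length_zip] at hj
    have hj2 : j + 1 < T.r2.length := by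
      simp [List.length_tail] at hj; omega
    refine ⟨j, hj2, ?_, ?_⟩
    · have : p.1 = T.r2[j] := by
        rw [← hpj]; simp [List.getElem_zip]
      split at hpb
      · rename_i h; rwa [this] at h
      · exact absurd hpb (by simp)
    · have hp2 : p.2 = T.r2[j+1] := by
        rw [← hpj]
        simp only [List.getElem_zip]
        exact List.getElem_tail _
      split at hpb
      · cases hpb; exact hp2
      · exact absurd hpb (by simp)
  · rintro ⟨j, hj, hA, rfl⟩
    rw [setB, List.mem_filterMap]
    refine ⟨(T.r2[j], T.r2[j+1]), ?_, ?_⟩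
    · rw [List.mem_iff_getElem]
      refine ⟨j, ?_, ?_⟩
      · rw [List.length_zip]; simp [List.length_tail]; omega
      · simp only [List.getElem_zip]
        congr 1
        exact List.getElem_tail _
    · simp [hA]

lemma pairwise_nodup {l : List ℕ} (h : l.Pairwise (· < ·)) : l.Nodup :=
  h.imp (fun h => ne_of_lt h)

lemma countA_le_countB (T : TwoRowT) (hp1 : T.r1.Pairwise (· < ·))
    (hp2 : T.r2.Pairwise (· < ·))
    (y : ℕ) (hy2 : y ∈ T.r2) (hyB : y ∉ setB T) :
    T.r1.countP (fun x => decide (x < y) && decide (x ∈ setA T))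
      ≤ T.r2.countP (fun x => decide (x < y) && decide (x ∈ setB T)) := by
  have nd1 : T.r1.Nodup := pairwise_nodup hp1
  have nd2 : T.r2.Nodup := pairwise_nodup hp2
  set pA : ℕ → Bool := fun x => decide (x < y) && decide (x ∈ setA T) with hpA
  set pB : ℕ → Bool := fun x => decide (x < y) && decide (x ∈ setB T) with hpB
  set f : ℕ → ℕ := fun a => T.r2.getD (T.r2.idxOf a + 1) 0 with hf
  have hcount1 : T.r1.countP pA = (T.r1.filter pA).toFinset.card := by
    rw [List.toFinset_card_of_nodup (nd1.filter _), List.countP_eq_length_filter]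
  have hcount2 : T.r2.countP pB = (T.r2.filter pB).toFinset.card := by
    rw [List.toFinset_card_of_nodup (nd2.filter _), List.countP_eq_length_filter]
  rw [hcount1, hcount2]
  have hqy : T.r2.idxOf y < T.r2.length := List.idxOf_lt_length_iff.mpr hy2
  have hyq : T.r2[T.r2.idxOf y] = y := List.getElem_idxOf hqy
  have main : ∀ a, a < y → a ∈ setA T →
      T.r2.idxOf a + 1 < T.r2.length ∧ f a ∈ setB T ∧ f a < y ∧ f a ∈ T.r2 := by
    intro a hay haA
    have ha2 : a ∈ T.r2 := ((mem_setA T a).mp haA).2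
    have hja : T.r2.idxOf a < T.r2.length := List.idxOf_lt_length_iff.mpr ha2
    have hjaa : T.r2[T.r2.idxOf a] = a := List.getElem_idxOf hja
    have hlt : T.r2.idxOf a < T.r2.idxOf y := by
      by_contra hc
      push_neg at hc
      rcases Nat.lt_or_ge (T.r2.idxOf y) (T.r2.idxOf a) with h | h
      · have := List.pairwise_iff_getElem.mp hp2 _ _ hqy hja h
        omega
      · have hii : T.r2.idxOf a = T.r2.idxOf y := by omega
        have : a = y := (List.idxOf_inj ha2).mp hii
        omega
    have hja1 : T.r2.idxOf a + 1 < T.r2.length := by omega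
    have hfa : f a = T.r2[T.r2.idxOf a + 1] := List.getD_eq_getElem _ 0 hja1
    have hfaB : f a ∈ setB T := by
      rw [mem_setB]
      exact ⟨T.r2.idxOf a, hja1, by rw [hjaa]; exact haA, hfa⟩
    have hfay : f a < y := by
      rcases Nat.lt_or_ge (T.r2.idxOf a + 1) (T.r2.idxOf y) with h | h
      · have := List.pairwise_iff_getElem.mp hp2 _ _ hja1 hqy h
        omega
      · have heq : T.r2.idxOf a + 1 = T.r2.idxOf y := by omega
        have : f a = y := by
          rw [hfa, ← hyq]
          congr 1
        rw [this] at hfaB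
        exact absurd hfaB hyB
    exact ⟨hja1, hfaB, hfay, hfa ▸ List.getElem_mem hja1⟩
  apply Finset.card_le_card_of_injOn f
  · intro a ha
    simp only [Finset.mem_coe, List.mem_toFinset, List.mem_filter, hpA, Bool.and_eq_true,
      decide_eq_true_eq] at ha
    obtain ⟨ha1, hay, haA⟩ := ha
    obtain ⟨_, hB, hlt, hmem⟩ := main a hay haA
    simp only [Finset.mem_coe, List.mem_toFinset, List.mem_filter, hpB, Bool.and_eq_true,
      decide_eq_true_eq]
    exact ⟨hmem, hlt, hB⟩
  · intro a ha a' ha' hff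
    simp only [Finset.mem_coe, List.mem_toFinset, List.mem_filter, hpA, Bool.and_eq_true,
      decide_eq_true_eq] at ha ha'
    have h1 := main a ha.2.1 ha.2.2
    have h2 := main a' ha'.2.1 ha'.2.2
    have e1 : f a = T.r2[T.r2.idxOf a + 1] := List.getD_eq_getElem _ 0 h1.1
    have e2 : f a' = T.r2[T.r2.idxOf a' + 1] := List.getD_eq_getElem _ 0 h2.1
    rw [e1, e2] at hff
    have nd2 : T.r2.Nodup := pairwise_nodup hp2
    have : T.r2.idxOf a + 1 = T.r2.idxOf a' + 1 := (nd2.getElem_inj_iff).mp hff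
    have hia : T.r2.idxOf a = T.r2.idxOf a' := by omega
    exact (List.idxOf_inj ((mem_setA T a).mp ha.2.2).2).mp hia

lemma core (T : TwoRowT) (hlen : T.r2.length ≤ T.r1.length)
    (hp1 : T.r1.Pairwise (· < ·)) (hp2 : T.r2.Pairwise (· < ·))
    (hcol : ∀ j, j < T.r2.length → T.r1.getD j 0 < T.r2.getD j 0)
    (j : ℕ) (hj : j < (T.r2.filter (fun x => x ∉ setB T)).length) :
    j < (T.r1.filter (fun x => x ∉ setA T)).length ∧
    (T.r1.filter (fun x => x ∉ setA T)).getD j 0 <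
      (T.r2.filter (fun x => x ∉ setB T)).getD j 0 := by
  set r1' := T.r1.filter (fun x => x ∉ setA T) with hr1'
  set r2' := T.r2.filter (fun x => x ∉ setB T) with hr2'
  have hp1' : r1'.Pairwise (· < ·) := hp1.sublist List.filter_sublist
  have hp2' : r2'.Pairwise (· < ·) := hp2.sublist List.filter_sublist
  have hyd : r2'.getD j 0 = r2'[j] := List.getD_eq_getElem _ 0 hj
  set y := r2'[j] with hy
  have hy2' : y ∈ r2' := List.getElem_mem hj
  have hymem : y ∈ T.r2 ∧ y ∉ setB T := by
    have := List.mem_filter.mp hy2'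
    simpa using this
  have hjc : r2'.countP (fun x => decide (x < y)) = j := countP_lt_getElem r2' hp2' j hj
  have hq : T.r2.idxOf y < T.r2.length := List.idxOf_lt_length_iff.mpr hymem.1
  have hyq : T.r2[T.r2.idxOf y] = y := List.getElem_idxOf hq
  have c2 : T.r2.countP (fun x => decide (x < y)) = T.r2.idxOf y := by
    have := countP_lt_getElem T.r2 hp2 _ hq
    rwa [hyq] at this
  have hq1 : T.r2.idxOf y < T.r1.length := lt_of_lt_of_le hq hlen
  have c1 : T.r2.idxOf y < T.r1.countP (fun x => decide (x < y)) := by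
    rw [← countP_lt_iff y T.r1 hp1 _ hq1]
    have h1 := hcol _ hq
    rw [List.getD_eq_getElem T.r2 0 hq, hyq] at h1
    exact h1
  have cA := countA_le_countB T hp1 hp2 y hymem.1 hymem.2
  have s1 : T.r1.countP (fun x => decide (x < y)) =
      T.r1.countP (fun x => decide (x < y) && decide (x ∈ setA T)) +
      T.r1.countP (fun x => decide (x < y) && !decide (x ∈ setA T)) :=
    countP_split T.r1 _ _
  have s2 : T.r2.countP (fun x => decide (x < y)) =
      T.r2.countP (fun x => decide (x < y) && decide (x ∈ setB T)) +
      T.r2.countP (fun x => decide (x < y) && !decide (x ∈ setB T)) :=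
    countP_split T.r2 _ _
  have e1 : r1'.countP (fun x => decide (x < y)) =
      T.r1.countP (fun x => decide (x < y) && !decide (x ∈ setA T)) := by
    rw [hr1', List.countP_filter]
    simp only [decide_not]
  have e2 : r2'.countP (fun x => decide (x < y)) =
      T.r2.countP (fun x => decide (x < y) && !decide (x ∈ setB T)) := by
    rw [hr2', List.countP_filter]
    simp only [decide_not]
  have key : j + 1 ≤ r1'.countP (fun x => decide (x < y)) := by
    rw [e1]; rw [e2] at hjc; omega
  have hjlen : j < r1'.length :=
    lt_of_lt_of_le key List.countP_le_length
  refine ⟨hjlen, ?_⟩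
  rw [hyd, countP_lt_iff y r1' hp1' j hjlen]
  omega

lemma filter_take_one (l : List ℕ) (p : ℕ → Bool) (hne : l ≠ []) (hp : p (l.getD 0 0)) :
    (l.filter p).take 1 = [l.getD 0 0] := by
  cases l with
  | nil => exact absurd rfl hne
  | cons x t =>
    simp only [List.getD_cons_zero] at hp ⊢
    rw [List.filter_cons, if_pos hp]
    rfl

lemma setB_head_lt (T : TwoRowT) (hp2 : T.r2.Pairwise (· < ·)) (b : ℕ) (hb : b ∈ setB T) :
    T.r2.getD 0 0 < b := by
  obtain ⟨j, hj, _, rfl⟩ := (mem_setB T b).mp hb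
  rw [List.getD_eq_getElem T.r2 0 (by omega)]
  exact List.pairwise_iff_getElem.mp hp2 0 (j+1) (by omega) hj (by omega)

lemma setB_subset_r2 (T : TwoRowT) : ∀ b ∈ setB T, b ∈ T.r2 := by
  intro b hb
  obtain ⟨j, hj, _, rfl⟩ := (mem_setB T b).mp hb
  exact List.getElem_mem hj


/-- Pechenik's map `Φ_{λ;m}` applied to an increasing gapless tableau of two-row
shape `λ` with maximum entry `m` produces a standard Young tableau with entries `1,...,m`. -/
theorem stmt_4 (l1 l2 n m : ℕ) (h2 : 1 ≤ l2) (h12 : l2 ≤ l1) (hn : n = l1 + l2)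
    (T : TwoRowT) (hT : IsIGLT l1 l2 m T) :
    IsSYTHook m (Phi T) := by
  obtain ⟨hl1, hl2, hc1, hc2, hcolh, hb1, hb2, hgap, hmm⟩ := hT
  have hp1 : T.r1.Pairwise (· < ·) := List.isChain_iff_pairwise.mp hc1
  have hp2 : T.r2.Pairwise (· < ·) := List.isChain_iff_pairwise.mp hc2
  have hlen : T.r2.length ≤ T.r1.length := by omega
  have hcol : ∀ j, j < T.r2.length → T.r1.getD j 0 < T.r2.getD j 0 := by
    intro j hj; exact hcolh j (by omega)
  have hBpw : (setB T).Pairwise (· < ·) :=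
    (hp2.sublist (List.tail_sublist _)).sublist (setB_sublist_tail T)
  have hsort : List.insertionSort (· ≤ ·) (setB T) = setB T :=
    List.Pairwise.insertionSort_eq (hBpw.imp le_of_lt)
  have hr1ne : T.r1 ≠ [] := by
    intro h; rw [h] at hl1; simp at hl1; omega
  have hr2ne : T.r2 ≠ [] := by
    intro h; rw [h] at hl2; simp at hl2; omega
  have hcol0 : T.r1.getD 0 0 < T.r2.getD 0 0 := hcol 0 (by omega)
  have h20mem : T.r2.getD 0 0 ∈ T.r2 := by
    rw [List.getD_eq_getElem T.r2 0 (by rw [hl2]; omega)]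
    exact List.getElem_mem _
  have h10A : T.r1.getD 0 0 ∉ setA T := by
    intro h
    have h2' := ((mem_setA T _).mp h).2
    have := sorted_head_le T.r2 hp2 _ h2'
    omega
  have h20B : T.r2.getD 0 0 ∉ setB T := by
    intro h
    have := setB_head_lt T hp2 _ h
    omega
  have hp1' : (T.r1.filter (fun x => x ∉ setA T)).Pairwise (· < ·) :=
    hp1.sublist List.filter_sublist
  have hp2' : (T.r2.filter (fun x => x ∉ setB T)).Pairwise (· < ·) :=
    hp2.sublist List.filter_sublist
  have h20r2' : T.r2.getD 0 0 ∈ T.r2.filter (fun x => x ∉ setB T) := by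
    rw [List.mem_filter]
    exact ⟨h20mem, by simpa using h20B⟩
  refine ⟨?_, ?_, ?_, ?_, ?_, ?_, ?_⟩
  · exact List.isChain_iff_pairwise.mpr hp1'
  · exact List.isChain_iff_pairwise.mpr hp2'
  · -- first column
    show ((T.r1.filter (fun x => x ∉ setA T)).take 1 ++
      (T.r2.filter (fun x => x ∉ setB T)).take 1 ++
      List.insertionSort (· ≤ ·) (setB T)).Chain' (· < ·)
    rw [hsort, filter_take_one T.r1 _ hr1ne (by simpa using h10A),
      filter_take_one T.r2 _ hr2ne (by simpa using h20B)]
    have hsplit : ([T.r1.getD 0 0] ++ [T.r2.getD 0 0] ++ setB T) =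
        T.r1.getD 0 0 :: T.r2.getD 0 0 :: setB T := by simp
    rw [hsplit]; apply List.isChain_iff_pairwise.mpr; rw [List.pairwise_cons, List.pairwise_cons]
    refine ⟨?_, ?_, hBpw⟩
    · intro b hb
      simp only [List.mem_cons] at hb
      rcases hb with rfl | hb
      · exact hcol0
      · exact lt_trans hcol0 (setB_head_lt T hp2 b hb)
    · intro b hb
      exact setB_head_lt T hp2 b hb
  · -- column inequality
    intro j hj
    exact (core T hlen hp1 hp2 hcol j hj).2
  · -- lengths
    show (T.r2.filter (fun x => x ∉ setB T)).length ≤ (T.r1.filter (fun x => x ∉ setA T)).length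
    rcases Nat.eq_zero_or_pos (T.r2.filter (fun x => x ∉ setB T)).length with h | h
    · omega
    · have := (core T hlen hp1 hp2 hcol ((T.r2.filter (fun x => x ∉ setB T)).length - 1)
        (by omega)).1
      omega
  · -- col nonempty → r2 nonempty
    intro _
    exact List.ne_nil_of_mem h20r2'
  · -- permutation
    show ((T.r1.filter (fun x => x ∉ setA T)) ++ (T.r2.filter (fun x => x ∉ setB T)) ++
      List.insertionSort (· ≤ ·) (setB T)).Perm (List.range' 1 m)
    rw [hsort]
    have hnd : ((T.r1.filter (fun x => x ∉ setA T)) ++ (T.r2.filter (fun x => x ∉ setB T)) ++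
        setB T).Nodup := by
      rw [List.append_assoc, List.nodup_append, List.nodup_append]
      refine ⟨pairwise_nodup hp1', ⟨pairwise_nodup hp2', pairwise_nodup hBpw, ?_⟩, ?_⟩
      · intro x hx2 _ hxB rfl
        have hx2' := (List.mem_filter.mp hx2).2
        simp only [decide_eq_true_eq] at hx2'
        exact hx2' hxB
      · intro x hx1 _ hx2 rfl
        have hx1m := (List.mem_filter.mp hx1).1
        have hx1A := (List.mem_filter.mp hx1).2
        simp only [decide_eq_true_eq] at hx1A
        have hx2r2 : x ∈ T.r2 := by
          rw [List.mem_append] at hx2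
          rcases hx2 with h | h
          · exact (List.mem_filter.mp h).1
          · exact setB_subset_r2 T x h
        exact hx1A ((mem_setA T x).mpr ⟨hx1m, hx2r2⟩)
    rw [List.perm_ext_iff_of_nodup hnd (List.nodup_range' (s := 1) (n := m))]
    intro x
    simp only [List.mem_append, List.mem_range'_1]
    constructor
    · rintro ((h | h) | h)
      · have := hb1 x (List.mem_filter.mp h).1; omega
      · have := hb2 x (List.mem_filter.mp h).1; omega
      · have := hb2 x (setB_subset_r2 T x h); omega
    · rintro ⟨hx1, hx2⟩
      have hxm : x ≤ m := by omega
      rcases hgap x hx1 hxm with h | h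
      · by_cases hxr2 : x ∈ T.r2
        · by_cases hxB : x ∈ setB T
          · right; exact hxB
          · left; right; rw [List.mem_filter]; exact ⟨hxr2, by simpa using hxB⟩
        · left; left
          rw [List.mem_filter]
          refine ⟨h, ?_⟩
          simp only [decide_eq_true_eq]
          intro hA
          exact hxr2 ((mem_setA T x).mp hA).2
      · by_cases hxB : x ∈ setB T
        · right; exact hxB
        · left; right; rw [List.mem_filter]; exact ⟨h, by simpa using hxB⟩
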